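/- Let n ≥ 1 and let C ⊆ GF(4)ⁿ be an additive self-orthogonal code with |C| = 2^{n−k} (0 ≤ k ≤ n) such that every nonzero vector of C⊥ has Hamming weight at least d (a pure code). Then k ≤ n − 2d + 2. (A pure [[n,k,d]] quantum code satisfies k ≤ n − 2d + 2.) -/

import Mathlib

/-!
The trace inner product is the image in `GF(4)` of an `𝔽₂`-bilinear form on the
`2n`-dimensional `𝔽₂`-space `GF(4)ⁿ`, so `C⊥` is an orthogonal complement and
`|C| · |C⊥| ≥ 4ⁿ`, i.e. `|C⊥| ≥ 2^(n+k)`. On the other hand two vectors of `C⊥` that agree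
outside `d - 1` fixed coordinates differ by a vector of `C⊥` of weight `< d`, hence coincide,
so `|C⊥| ≤ 4^(n-d+1)` (the Singleton bound). Comparing exponents gives `n + k ≤ 2(n - d + 1)`.
-/

noncomputable section

open Finset Polynomial

/-- The field `GF(4)` with four elements. -/
abbrev F4 := GaloisField 2 2

/-- The trace inner product `u∗v = Σⱼ (uⱼ v̄ⱼ + ūⱼ vⱼ)` on `GF(4)ⁿ`,
where conjugation is `x̄ = x²`.  It takes values in the prime subfield. -/
def trIP {n : ℕ} (u v : Fin n → F4) : F4 :=
  ∑ j, (u j * (v j) ^ 2 + (u j) ^ 2 * v j)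

/-- The Hamming weight of a vector in `GF(4)ⁿ`. -/
def wt {n : ℕ} (u : Fin n → F4) : ℕ := Set.ncard {j | u j ≠ 0}

/-- The dual of a code with respect to the trace inner product. -/
def trDual {n : ℕ} (C : Set (Fin n → F4)) : Set (Fin n → F4) :=
  {u | ∀ v ∈ C, trIP u v = 0}

section SingletonBound

variable {ι A : Type*} [Fintype ι] [DecidableEq ι] [AddGroup A] [Finite A] [DecidableEq A]

theorem AddSubgroup.natCard_le_pow_of_card_lt_hammingNorm (D : AddSubgroup (ι → A))
    (s : Finset ι) (hs : ∀ v ∈ D, v ≠ 0 → #s < hammingNorm v) :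
    Nat.card D ≤ Nat.card A ^ (Fintype.card ι - #s) := by
  let restrict : D → ((sᶜ : Finset ι) → A) := fun v i => v.1 i
  have h_inj : Function.Injective restrict := by
    rintro ⟨v, hv⟩ ⟨w, hw⟩ hvw
    by_contra hne
    have hsub : v - w ≠ 0 := sub_ne_zero.mpr fun h => hne (Subtype.ext h)
    refine (hs _ (D.sub_mem hv hw) hsub).not_ge (card_le_card fun i hi => ?_)
    by_contra his
    have hvwi : v i = w i := congrFun hvw ⟨i, mem_compl.mpr his⟩
    simp [hvwi] at hi
  calc Nat.card D ≤ Nat.card ((sᶜ : Finset ι) → A) := Nat.card_le_card_of_injective _ h_inj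
    _ = Nat.card A ^ (Fintype.card ι - #s) := by
      rw [Nat.card_fun, Nat.card_eq_finsetCard, card_compl]

theorem AddSubgroup.natCard_le_pow_of_le_hammingNorm (D : AddSubgroup (ι → A)) (d : ℕ)
    (hd : ∀ v ∈ D, v ≠ 0 → d ≤ hammingNorm v) :
    Nat.card D ≤ Nat.card A ^ (Fintype.card ι - (d - 1)) := by
  obtain ⟨s, -, hs⟩ := exists_subset_card_eq (s := univ)
    (min_le_right (d - 1) (Fintype.card ι))
  have hbound := D.natCard_le_pow_of_card_lt_hammingNorm s fun v hv hv0 => by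
    have hdv := hd v hv hv0
    have hpos := hammingNorm_pos_iff.mpr hv0
    omega
  rwa [hs, show Fintype.card ι - min (d - 1) (Fintype.card ι) = Fintype.card ι - (d - 1) by
    omega] at hbound

end SingletonBound

theorem F4.natCard : Nat.card F4 = 4 := GaloisField.card 2 2 two_ne_zero

theorem F4.finrank : Module.finrank (ZMod 2) F4 = 2 := GaloisField.finrank 2 two_ne_zero

theorem F4.pow_four (x : F4) : x ^ 4 = x := by
  have := Fintype.ofFinite F4
  rw [← F4.natCard, Nat.card_eq_fintype_card, FiniteField.pow_card]

theorem F4.algebraMap_trace (x : F4) :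
    algebraMap (ZMod 2) F4 (Algebra.trace (ZMod 2) F4 x) = x + x ^ 2 := by
  simp [FiniteField.algebraMap_trace_eq_sum_pow, F4.finrank, sum_range_succ]

theorem wt_eq_hammingNorm [DecidableEq F4] {n : ℕ} (u : Fin n → F4) : wt u = hammingNorm u := by
  simp [wt, hammingNorm, Set.ncard_eq_toFinset_card']

theorem trIP_comm {n : ℕ} (u v : Fin n → F4) : trIP u v = trIP v u :=
  sum_congr rfl fun _ _ => by ring

def trForm (n : ℕ) : LinearMap.BilinForm (ZMod 2) (Fin n → F4) :=
  LinearMap.mk₂ (ZMod 2) (fun u v => Algebra.trace (ZMod 2) F4 (∑ j, u j * v j ^ 2))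
    (fun u u' v => by simp [add_mul, sum_add_distrib])
    (fun c u v => by simp only [Pi.smul_apply, smul_mul_assoc, ← smul_sum, map_smul])
    (fun u v v' => by simp [CharTwo.add_sq, mul_add, sum_add_distrib])
    (fun c u v => by
      simp only [Pi.smul_apply, _root_.smul_pow, ZMod.pow_card, mul_smul_comm, ← smul_sum,
        map_smul])

theorem algebraMap_trForm {n : ℕ} (u v : Fin n → F4) :
    algebraMap (ZMod 2) F4 (trForm n u v) = trIP u v := by
  simp only [trForm, LinearMap.mk₂_apply, map_sum, trIP]
  refine sum_congr rfl fun j _ => ?_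
  rw [F4.algebraMap_trace, mul_pow, ← pow_mul, F4.pow_four]

theorem trDual_eq_orthogonal {n : ℕ} (C : AddSubgroup (Fin n → F4)) :
    trDual (C : Set (Fin n → F4)) = (trForm n).orthogonal (C.toZModSubmodule 2) := by
  ext u
  simp only [trDual, Set.mem_ofPred_eq, SetLike.mem_coe, LinearMap.BilinForm.mem_orthogonal_iff,
    AddSubgroup.mem_toZModSubmodule]
  refine forall₂_congr fun v _ => ?_
  rw [trIP_comm, ← algebraMap_trForm, map_eq_zero_iff _ (algebraMap (ZMod 2) F4).injective]

theorem pow_le_natCard_mul_natCard_trDual {n : ℕ} (C : AddSubgroup (Fin n → F4)) :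
    4 ^ n ≤ Nat.card C * Nat.card (trDual (C : Set (Fin n → F4))) := by
  set W := C.toZModSubmodule 2
  have hdim := (trForm n).finrank_add_finrank_orthogonal' W
  have hV : Module.finrank (ZMod 2) (Fin n → F4) = 2 * n := by
    simp [Module.finrank_pi_fintype, F4.finrank, mul_comm]
  rw [trDual_eq_orthogonal]
  calc 4 ^ n = 2 ^ Module.finrank (ZMod 2) (Fin n → F4) := by rw [hV, pow_mul]; norm_num
    _ ≤ 2 ^ (Module.finrank (ZMod 2) W + Module.finrank (ZMod 2) ((trForm n).orthogonal W)) :=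
      Nat.pow_le_pow_right two_pos (by omega)
    _ = Nat.card W * Nat.card ((trForm n).orthogonal W) := by
      rw [pow_add, Module.natCard_eq_pow_finrank (K := ZMod 2),
        Module.natCard_eq_pow_finrank (K := ZMod 2) (V := (trForm n).orthogonal W), Nat.card_zmod]
    _ = _ := rfl

theorem natCard_trDual_le {n : ℕ} (C : AddSubgroup (Fin n → F4)) (d : ℕ)
    (hd : ∀ v ∈ trDual (C : Set (Fin n → F4)), v ≠ 0 → d ≤ wt v) :
    Nat.card (trDual (C : Set (Fin n → F4))) ≤ 4 ^ (n - (d - 1)) := by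
  classical
  rw [trDual_eq_orthogonal] at hd ⊢
  simpa [F4.natCard] using
    ((trForm n).orthogonal (C.toZModSubmodule 2)).toAddSubgroup.natCard_le_pow_of_le_hammingNorm d
      fun v hv hv0 => wt_eq_hammingNorm v ▸ hd v hv hv0

theorem pure_singleton_bound_general (n k d : ℕ) (hn : 1 ≤ n) (hk : k ≤ n)
    (C : AddSubgroup (Fin n → F4))
    (hcard : Nat.card C = 2 ^ (n - k))
    (hpure : ∀ v ∈ trDual (C : Set (Fin n → F4)), v ≠ 0 → d ≤ wt v) :
    (k : ℤ) ≤ (n : ℤ) - 2 * d + 2 := by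
  have hcount : 2 ^ (2 * n) ≤ 2 ^ (n - k + 2 * (n - (d - 1))) :=
    calc 2 ^ (2 * n) = 4 ^ n := by rw [pow_mul]; norm_num
      _ ≤ Nat.card C * Nat.card (trDual (C : Set (Fin n → F4))) :=
        pow_le_natCard_mul_natCard_trDual C
      _ ≤ 2 ^ (n - k) * 4 ^ (n - (d - 1)) :=
        hcard ▸ Nat.mul_le_mul_left _ (natCard_trDual_le C d hpure)
      _ = 2 ^ (n - k + 2 * (n - (d - 1))) := by rw [pow_add, pow_mul]; norm_num
  have := (Nat.pow_le_pow_iff_right (by norm_num)).mp hcount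
  omega

/-- Singleton bound for pure codes: a pure [[n,k,d]] code satisfies
k ≤ n - 2d + 2. -/
theorem pure_singleton_bound (n k d : ℕ) (hn : 1 ≤ n) (hk : k ≤ n)
    (C : AddSubgroup (Fin n → F4))
    (hso : (C : Set (Fin n → F4)) ⊆ trDual (C : Set (Fin n → F4)))
    (hcard : Nat.card C = 2 ^ (n - k))
    (hpure : ∀ v ∈ trDual (C : Set (Fin n → F4)), v ≠ 0 → d ≤ wt v) :
    (k : ℤ) ≤ (n : ℤ) - 2 * d + 2 :=
  pure_singleton_bound_general n k d hn hk C hcard hpure
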